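/- Let $V$ be an $N \times N$ Haar-distributed unitary matrix with $N \geq 2$. Then for $n \neq n'$ and $m \neq m'$, $\mathbb{E}[V_{nm} V_{n'm'} V_{nm'}^* V_{n'm}^*] = -1/(N(N^2-1))$. -/

import Mathlib

open MeasureTheory Matrix

noncomputable instance matrixMeasurableSpace (m n : Type*) :
    MeasurableSpace (Matrix m n ℂ) :=
  inferInstanceAs (MeasurableSpace (m → n → ℂ))

variable {N : ℕ}

abbrev UG (N : ℕ) := Matrix.unitaryGroup (Fin N) ℂ

-- entry norm bound
lemma entry_norm_le_one (V : UG N) (i j : Fin N) : ‖(V : Matrix (Fin N) (Fin N) ℂ) i j‖ ≤ 1 := by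
  have hV : star (V : Matrix (Fin N) (Fin N) ℂ) * V = 1 := V.2.1
  have h1 : (star (V : Matrix (Fin N) (Fin N) ℂ) * V) j j = 1 := by rw [hV]; simp
  rw [Matrix.mul_apply] at h1
  have h2 : ∑ k, Complex.normSq ((V : Matrix (Fin N) (Fin N) ℂ) k j) = 1 := by
    have := h1
    simp only [Matrix.star_apply] at this
    have : ∑ k, (starRingEnd ℂ) ((V : Matrix (Fin N) (Fin N) ℂ) k j) * (V : Matrix (Fin N) (Fin N) ℂ) k j = 1 := this
    have := congrArg Complex.re this
    simpa [Complex.normSq, Complex.mul_re, Complex.normSq_apply] using this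
  have h3 : Complex.normSq ((V : Matrix (Fin N) (Fin N) ℂ) i j) ≤ 1 := by
    rw [← h2]
    exact Finset.single_le_sum (f := fun k => Complex.normSq ((V : Matrix (Fin N) (Fin N) ℂ) k j))
      (fun k _ => Complex.normSq_nonneg _) (Finset.mem_univ i)
  have : ‖(V : Matrix (Fin N) (Fin N) ℂ) i j‖ ^ 2 ≤ 1 := by
    rw [Complex.sq_norm]; exact h3
  nlinarith [norm_nonneg ((V : Matrix (Fin N) (Fin N) ℂ) i j)]

lemma meas_entry (i j : Fin N) : Measurable (fun V : UG N => (V : Matrix (Fin N) (Fin N) ℂ) i j) :=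
  ((measurable_pi_apply j).comp ((measurable_pi_apply i).comp measurable_subtype_coe))

def Nice (f : UG N → ℂ) : Prop := Measurable f ∧ ∀ V, ‖f V‖ ≤ 1

lemma Nice.mul {f g : UG N → ℂ} (hf : Nice f) (hg : Nice g) : Nice (fun V => f V * g V) :=
  ⟨hf.1.mul hg.1, fun V => by
    calc ‖f V * g V‖ = ‖f V‖ * ‖g V‖ := norm_mul _ _
    _ ≤ 1 * 1 := mul_le_mul (hf.2 V) (hg.2 V) (norm_nonneg _) zero_le_one
    _ = 1 := mul_one 1⟩

lemma Nice.star {f : UG N → ℂ} (hf : Nice f) : Nice (fun V => star (f V)) :=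
  ⟨Complex.continuous_conj.measurable.comp hf.1, fun V => by
    simpa using hf.2 V⟩

lemma nice_entry (i j : Fin N) : Nice (fun V : UG N => (V : Matrix (Fin N) (Fin N) ℂ) i j) :=
  ⟨meas_entry i j, fun V => entry_norm_le_one V i j⟩

lemma Nice.integrable {f : UG N → ℂ} (hf : Nice f) (μ : Measure (UG N)) [IsProbabilityMeasure μ] :
    Integrable f μ :=
  ⟨hf.1.aestronglyMeasurable,
    (HasFiniteIntegral.of_bounded (C := 1) (Filter.Eventually.of_forall hf.2))⟩

lemma meas_mul_right (U : UG N) : Measurable (fun V : UG N => V * U) := by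
  apply Measurable.subtype_mk
  have : (fun V : UG N => ((V * U : UG N) : Matrix (Fin N) (Fin N) ℂ)) =
      fun V : UG N => (V : Matrix (Fin N) (Fin N) ℂ) * (U : Matrix (Fin N) (Fin N) ℂ) := by
    ext V i j; simp
  show Measurable fun V : UG N => (V : Matrix (Fin N) (Fin N) ℂ) * (U : Matrix (Fin N) (Fin N) ℂ)
  apply measurable_pi_lambda
  intro i
  apply measurable_pi_lambda
  intro j
  show Measurable fun V : UG N => ((V : Matrix (Fin N) (Fin N) ℂ) * (U : Matrix (Fin N) (Fin N) ℂ)) i j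
  simp only [Matrix.mul_apply]
  exact Finset.measurable_sum _ fun k _ => (meas_entry i k).mul_const _

lemma meas_mul_left (U : UG N) : Measurable (fun V : UG N => U * V) := by
  apply Measurable.subtype_mk
  show Measurable fun V : UG N => ((U : Matrix (Fin N) (Fin N) ℂ) * (V : Matrix (Fin N) (Fin N) ℂ))
  apply measurable_pi_lambda
  intro i
  apply measurable_pi_lambda
  intro j
  show Measurable fun V : UG N => ((U : Matrix (Fin N) (Fin N) ℂ) * (V : Matrix (Fin N) (Fin N) ℂ)) i j
  simp only [Matrix.mul_apply]
  exact Finset.measurable_sum _ fun k _ => (meas_entry k j).const_mul _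

lemma integral_right_inv {μ : Measure (UG N)} [IsProbabilityMeasure μ]
    (hright : ∀ U : UG N, Measure.map (fun V => V * U) μ = μ)
    {f : UG N → ℂ} (hf : Nice f) (U : UG N) :
    ∫ V, f (V * U) ∂μ = ∫ V, f V ∂μ := by
  conv_rhs => rw [← hright U]
  rw [integral_map (meas_mul_right U).aemeasurable hf.1.aestronglyMeasurable]

lemma integral_left_inv {μ : Measure (UG N)} [IsProbabilityMeasure μ]
    (hleft : ∀ U : UG N, Measure.map (fun V => U * V) μ = μ)
    {f : UG N → ℂ} (hf : Nice f) (U : UG N) :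
    ∫ V, f (U * V) ∂μ = ∫ V, f V ∂μ := by
  conv_rhs => rw [← hleft U]
  rw [integral_map (meas_mul_left U).aemeasurable hf.1.aestronglyMeasurable]


-- permutation matrix is unitary
lemma perm_mem (σ : Equiv.Perm (Fin N)) : σ.permMatrix ℂ ∈ Matrix.unitaryGroup (Fin N) ℂ := by
  rw [Matrix.mem_unitaryGroup_iff]
  have hstar : star (σ.permMatrix ℂ) = (σ⁻¹).permMatrix ℂ := by
    have h1 : ((σ⁻¹).permMatrix ℂ) = (σ.permMatrix ℂ)ᵀ := by
      show ((σ⁻¹).toPEquiv.toMatrix : Matrix _ _ ℂ) = _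
      rw [show (σ⁻¹ : Equiv.Perm (Fin N)) = σ.symm from rfl,
        Equiv.toPEquiv_symm, PEquiv.toMatrix_symm]
    rw [h1]
    ext i j
    simp [Matrix.conjTranspose_apply, PEquiv.toMatrix_apply, apply_ite]
  rw [hstar, show ((σ.permMatrix ℂ) * ((σ⁻¹).permMatrix ℂ)) =
      ((σ.toPEquiv.trans (σ⁻¹).toPEquiv).toMatrix : Matrix _ _ ℂ) from
      (PEquiv.toMatrix_trans _ _).symm]
  rw [← Equiv.toPEquiv_trans]
  rw [show Equiv.trans σ σ⁻¹ = Equiv.refl (Fin N) from Equiv.self_trans_symm σ,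
    Equiv.toPEquiv_refl]
  exact PEquiv.toMatrix_refl

def swapCol (a b : Fin N) : UG N := ⟨(Equiv.swap a b).permMatrix ℂ, perm_mem _⟩

def swapRow (a b : Fin N) : UG N := ⟨(Equiv.swap a b).permMatrix ℂ, perm_mem _⟩

lemma swapCol_action (a b : Fin N) (V : UG N) (i j : Fin N) :
    ((V * swapCol a b : UG N) : Matrix (Fin N) (Fin N) ℂ) i j
      = (V : Matrix (Fin N) (Fin N) ℂ) i (Equiv.swap a b j) := by
  show ((V : Matrix (Fin N) (Fin N) ℂ) * (Equiv.swap a b).permMatrix ℂ) i j = _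
  rw [PEquiv.mul_toMatrix_toPEquiv]
  simp [Equiv.symm_swap]

lemma swapRow_action (a b : Fin N) (V : UG N) (i j : Fin N) :
    ((swapRow a b * V : UG N) : Matrix (Fin N) (Fin N) ℂ) i j
      = (V : Matrix (Fin N) (Fin N) ℂ) (Equiv.swap a b i) j := by
  show ((Equiv.swap a b).permMatrix ℂ * (V : Matrix (Fin N) (Fin N) ℂ)) i j = _
  rw [PEquiv.toMatrix_toPEquiv_mul]
  simp

-- phase matrix: multiplies column a by Complex.I
noncomputable def phaseD (a : Fin N) : UG N :=
  ⟨Matrix.diagonal (fun k => if k = a then Complex.I else 1), by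
    rw [Matrix.mem_unitaryGroup_iff]
    rw [Matrix.star_eq_conjTranspose, Matrix.diagonal_conjTranspose, Matrix.diagonal_mul_diagonal]
    ext i j
    by_cases hij : i = j
    · subst hij
      rw [Matrix.diagonal_apply_eq, Matrix.one_apply_eq]
      show (if i = a then Complex.I else 1) * star (if i = a then Complex.I else 1) = 1
      by_cases h : i = a <;> simp [h, Complex.I_mul_I]
    · rw [Matrix.diagonal_apply_ne _ hij, Matrix.one_apply_ne hij]⟩

lemma phaseD_action (a : Fin N) (V : UG N) (i j : Fin N) :
    ((V * phaseD a : UG N) : Matrix (Fin N) (Fin N) ℂ) i j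
      = (V : Matrix (Fin N) (Fin N) ℂ) i j * (if j = a then Complex.I else 1) := by
  show ((V : Matrix (Fin N) (Fin N) ℂ) *
    Matrix.diagonal (fun k => if k = a then Complex.I else 1)) i j = _
  rw [Matrix.mul_diagonal]

-- rotation (Hadamard) matrix mixing columns a and b
noncomputable def rotMat (a b : Fin N) : Matrix (Fin N) (Fin N) ℂ := fun i j =>
  if i = a then (if j = a then ((((Real.sqrt 2)⁻¹ : ℝ)) : ℂ) else if j = b then ((((Real.sqrt 2)⁻¹ : ℝ)) : ℂ) else 0)
  else if i = b then (if j = a then ((((Real.sqrt 2)⁻¹ : ℝ)) : ℂ) else if j = b then -((((Real.sqrt 2)⁻¹ : ℝ)) : ℂ) else 0)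
  else if j = i then 1 else 0

lemma sum_two_point {M : Type*} [AddCommMonoid M] (f : Fin N → M) (a b : Fin N) (hab : a ≠ b)
    (x y : M) (hf : ∀ k, f k = if k = a then x else if k = b then y else 0) :
    ∑ k, f k = x + y := by
  have h : ∀ k, f k = (if k = a then x else 0) + (if k = b then y else 0) := by
    intro k
    rw [hf k]
    by_cases h1 : k = a
    · simp [h1, Ne.symm hab, hab]
    · by_cases h2 : k = b <;> simp [h1, h2, Ne.symm hab]
  rw [Finset.sum_congr rfl fun k _ => h k, Finset.sum_add_distrib]
  simp

lemma sum_one_point {M : Type*} [AddCommMonoid M] (f : Fin N → M) (a : Fin N) (x : M)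
    (hf : ∀ k, f k = if k = a then x else 0) :
    ∑ k, f k = x := by
  rw [Finset.sum_congr rfl fun k _ => hf k]
  simp

lemma rot_mem (a b : Fin N) (hab : a ≠ b) : rotMat a b ∈ Matrix.unitaryGroup (Fin N) ℂ := by
  set c : ℂ := ((((Real.sqrt 2)⁻¹ : ℝ)) : ℂ) with hcdef
  have hc : c * c = 1/2 := by
    rw [hcdef]
    norm_cast
    rw [← mul_inv, Real.mul_self_sqrt (by norm_num)]
    norm_num
  have hcstar : star c = c := by
    rw [hcdef]; exact Complex.conj_ofReal _
  have selfadj : ∀ i j, star (rotMat a b i j) = rotMat a b i j := by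
    intro i j
    unfold rotMat
    split_ifs <;> simp [hcstar, ← hcdef]
  have entry_a : ∀ k, rotMat a b a k = if k = a then c else if k = b then c else 0 := by
    intro k; unfold rotMat; rw [if_pos rfl]
  have entry_b : ∀ k, rotMat a b b k = if k = a then c else if k = b then -c else 0 := by
    intro k; unfold rotMat; rw [if_neg (Ne.symm hab), if_pos rfl]
  have entry_o : ∀ i k, i ≠ a → i ≠ b → rotMat a b i k = if k = i then 1 else 0 := by
    intro i k hia hib; unfold rotMat; rw [if_neg hia, if_neg hib]
  rw [Matrix.mem_unitaryGroup_iff]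
  ext i j
  rw [Matrix.mul_apply, Matrix.one_apply]
  simp only [Matrix.star_apply, selfadj]
  by_cases hi : i = a
  · by_cases hj : j = a
    · rw [hi, hj, if_pos rfl]
      rw [sum_two_point _ a b hab (c*c) (c*c) ?_]
      · rw [hc]; norm_num
      · intro k
        rw [entry_a k]
        by_cases h1 : k = a
        · simp [h1, Ne.symm hab, hab]
        · by_cases h2 : k = b <;> simp [h1, h2, Ne.symm hab]
    · by_cases hj2 : j = b
      · rw [hi, hj2, if_neg hab]
        rw [sum_two_point _ a b hab (c*c) (c*(-c)) ?_]
        · ring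
        · intro k
          rw [entry_a k, entry_b k]
          by_cases h1 : k = a
          · simp [h1, Ne.symm hab, hab]
          · by_cases h2 : k = b <;> simp [h1, h2, Ne.symm hab]
      · rw [if_neg (by rw [hi]; exact fun h => hj h.symm), Finset.sum_eq_zero]
        intro k _
        rw [hi, entry_a k, entry_o j k hj hj2]
        by_cases h1 : k = j
        · rw [if_pos h1, h1, if_neg hj, if_neg hj2, zero_mul]
        · simp [h1]
  · by_cases hi2 : i = b
    · by_cases hj : j = a
      · rw [hi2, hj, if_neg (Ne.symm hab)]
        rw [sum_two_point _ a b hab (c*c) ((-c)*c) ?_]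
        · ring
        · intro k
          rw [entry_a k, entry_b k]
          by_cases h1 : k = a
          · simp [h1, Ne.symm hab, hab]
          · by_cases h2 : k = b <;> simp [h1, h2, Ne.symm hab]
      · by_cases hj2 : j = b
        · rw [hi2, hj2, if_pos rfl]
          rw [sum_two_point _ a b hab (c*c) ((-c)*(-c)) ?_]
          · rw [show (-c)*(-c) = c*c by ring, hc]; norm_num
          · intro k
            rw [entry_b k]
            by_cases h1 : k = a
            · simp [h1, Ne.symm hab, hab]
            · by_cases h2 : k = b <;> simp [h1, h2, Ne.symm hab]
        · rw [if_neg (by rw [hi2]; exact fun h => hj2 h.symm), Finset.sum_eq_zero]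
          intro k _
          rw [hi2, entry_b k, entry_o j k hj hj2]
          by_cases h1 : k = j
          · rw [if_pos h1, h1, if_neg hj, if_neg hj2, zero_mul]
          · simp [h1]
    · rw [sum_one_point _ i (if i = j then 1 else 0 : ℂ) ?_]
      intro k
      rw [entry_o i k hi hi2]
      by_cases h1 : k = i
      · rw [if_pos h1, if_pos h1, one_mul, h1]
        by_cases h2 : j = a
        · rw [h2, entry_a i, if_neg hi, if_neg hi2, if_neg hi]
        · by_cases h3 : j = b
          · rw [h3, entry_b i, if_neg hi, if_neg hi2, if_neg hi2]
          · rw [entry_o j i h2 h3]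
      · simp [h1]

noncomputable def rotU (a b : Fin N) (hab : a ≠ b) : UG N := ⟨rotMat a b, rot_mem a b hab⟩

lemma rotU_action (a b : Fin N) (hab : a ≠ b) (V : UG N) (i : Fin N) :
    (((V * rotU a b hab : UG N) : Matrix (Fin N) (Fin N) ℂ) i a
      = ((((Real.sqrt 2)⁻¹ : ℝ)) : ℂ) * ((V : Matrix (Fin N) (Fin N) ℂ) i a
          + (V : Matrix (Fin N) (Fin N) ℂ) i b))
    ∧ (((V * rotU a b hab : UG N) : Matrix (Fin N) (Fin N) ℂ) i b
      = ((((Real.sqrt 2)⁻¹ : ℝ)) : ℂ) * ((V : Matrix (Fin N) (Fin N) ℂ) i a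
          - (V : Matrix (Fin N) (Fin N) ℂ) i b)) := by
  set c : ℂ := ((((Real.sqrt 2)⁻¹ : ℝ)) : ℂ) with hcdef
  constructor
  · show ((V : Matrix (Fin N) (Fin N) ℂ) * rotMat a b) i a = _
    rw [Matrix.mul_apply]
    rw [sum_two_point _ a b hab ((V : Matrix (Fin N) (Fin N) ℂ) i a * c)
      ((V : Matrix (Fin N) (Fin N) ℂ) i b * c) ?_]
    · ring
    · intro k
      unfold rotMat
      by_cases h1 : k = a
      · simp [h1, Ne.symm hab, hab, hcdef]
      · by_cases h2 : k = b
        · simp [h1, h2, Ne.symm hab, hab, hcdef]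
        · simp [h1, h2, Ne.symm h1, Ne.symm h2, Ne.symm hab, hab]
  · show ((V : Matrix (Fin N) (Fin N) ℂ) * rotMat a b) i b = _
    rw [Matrix.mul_apply]
    rw [sum_two_point _ a b hab ((V : Matrix (Fin N) (Fin N) ℂ) i a * c)
      ((V : Matrix (Fin N) (Fin N) ℂ) i b * (-c)) ?_]
    · ring
    · intro k
      unfold rotMat
      by_cases h1 : k = a
      · simp [h1, Ne.symm hab, hab, hcdef]
      · by_cases h2 : k = b
        · simp [h1, h2, Ne.symm hab, hab, hcdef]
        · simp [h1, h2, Ne.symm h1, Ne.symm h2, Ne.symm hab, hab]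

-- monomial of degree (2,2)
def mono (p q r s : Fin N × Fin N) : UG N → ℂ := fun V =>
  (V : Matrix (Fin N) (Fin N) ℂ) p.1 p.2 * (V : Matrix (Fin N) (Fin N) ℂ) q.1 q.2 *
    star ((V : Matrix (Fin N) (Fin N) ℂ) r.1 r.2) *
    star ((V : Matrix (Fin N) (Fin N) ℂ) s.1 s.2)

lemma nice_mono (p q r s : Fin N × Fin N) : Nice (mono p q r s) :=
  (((nice_entry p.1 p.2).mul (nice_entry q.1 q.2)).mul (nice_entry r.1 r.2).star).mul
    (nice_entry s.1 s.2).star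

noncomputable def Jm (μ : Measure (UG N)) (p q r s : Fin N × Fin N) : ℂ :=
  ∫ V, mono p q r s V ∂μ

section main

variable {μ : Measure (UG N)} [IsProbabilityMeasure μ]

lemma J_col (hright : ∀ U : UG N, Measure.map (fun V => V * U) μ = μ)
    (a b : Fin N) (p q r s : Fin N × Fin N) :
    Jm μ (p.1, Equiv.swap a b p.2) (q.1, Equiv.swap a b q.2) (r.1, Equiv.swap a b r.2)
      (s.1, Equiv.swap a b s.2) = Jm μ p q r s := by
  have h := integral_right_inv hright (nice_mono p q r s) (swapCol a b)
  have h2 : (fun V => mono p q r s (V * swapCol a b)) =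
      mono (p.1, Equiv.swap a b p.2) (q.1, Equiv.swap a b q.2) (r.1, Equiv.swap a b r.2)
        (s.1, Equiv.swap a b s.2) := by
    funext V
    unfold mono
    rw [swapCol_action, swapCol_action, swapCol_action, swapCol_action]
  unfold Jm
  rw [← h, h2]

lemma J_row (hleft : ∀ U : UG N, Measure.map (fun V => U * V) μ = μ)
    (a b : Fin N) (p q r s : Fin N × Fin N) :
    Jm μ (Equiv.swap a b p.1, p.2) (Equiv.swap a b q.1, q.2) (Equiv.swap a b r.1, r.2)
      (Equiv.swap a b s.1, s.2) = Jm μ p q r s := by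
  have h := integral_left_inv hleft (nice_mono p q r s) (swapRow a b)
  have h2 : (fun V => mono p q r s (swapRow a b * V)) =
      mono (Equiv.swap a b p.1, p.2) (Equiv.swap a b q.1, q.2) (Equiv.swap a b r.1, r.2)
        (Equiv.swap a b s.1, s.2) := by
    funext V
    unfold mono
    rw [swapRow_action, swapRow_action, swapRow_action, swapRow_action]
  unfold Jm
  rw [← h, h2]

def mono2 (p r : Fin N × Fin N) : UG N → ℂ := fun V =>
  (V : Matrix (Fin N) (Fin N) ℂ) p.1 p.2 * star ((V : Matrix (Fin N) (Fin N) ℂ) r.1 r.2)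

lemma nice_mono2 (p r : Fin N × Fin N) : Nice (mono2 p r) :=
  (nice_entry p.1 p.2).mul (nice_entry r.1 r.2).star

lemma row_norm (V : UG N) (i : Fin N) :
    ∑ k, (V : Matrix (Fin N) (Fin N) ℂ) i k * star ((V : Matrix (Fin N) (Fin N) ℂ) i k) = 1 := by
  have hV : (V : Matrix (Fin N) (Fin N) ℂ) * star (V : Matrix (Fin N) (Fin N) ℂ) = 1 := V.2.2
  have := congrFun (congrFun hV i) i
  rw [Matrix.mul_apply] at this
  simp only [Matrix.star_apply] at this
  rw [this]
  exact Matrix.one_apply_eq i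

lemma row_orth (V : UG N) {i i' : Fin N} (h : i ≠ i') :
    ∑ k, (V : Matrix (Fin N) (Fin N) ℂ) i k * star ((V : Matrix (Fin N) (Fin N) ℂ) i' k) = 0 := by
  have hV : (V : Matrix (Fin N) (Fin N) ℂ) * star (V : Matrix (Fin N) (Fin N) ℂ) = 1 := V.2.2
  have := congrFun (congrFun hV i) i'
  rw [Matrix.mul_apply] at this
  simp only [Matrix.star_apply] at this
  rw [this]
  exact Matrix.one_apply_ne h

lemma col_norm (V : UG N) (j : Fin N) :
    ∑ k, star ((V : Matrix (Fin N) (Fin N) ℂ) k j) * (V : Matrix (Fin N) (Fin N) ℂ) k j = 1 := by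
  have hV : star (V : Matrix (Fin N) (Fin N) ℂ) * (V : Matrix (Fin N) (Fin N) ℂ) = 1 := V.2.1
  have := congrFun (congrFun hV j) j
  rw [Matrix.mul_apply] at this
  simp only [Matrix.star_apply] at this
  rw [this]
  exact Matrix.one_apply_eq j

lemma second_moment (hright : ∀ U : UG N, Measure.map (fun V => V * U) μ = μ)
    (hNpos : 0 < N) (i j : Fin N) :
    ∫ V, mono2 (i, j) (i, j) V ∂μ = ((N : ℂ))⁻¹ := by
  have hswap : ∀ k : Fin N, ∫ V, mono2 (i, k) (i, k) V ∂μ = ∫ V, mono2 (i, j) (i, j) V ∂μ := by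
    intro k
    have h := integral_right_inv hright (nice_mono2 (i, j) (i, j)) (swapCol j k)
    have h2 : (fun V => mono2 (i, j) (i, j) (V * swapCol j k)) = mono2 (i, k) (i, k) := by
      funext V
      unfold mono2
      simp only [swapCol_action, Equiv.swap_apply_left]
    rw [h2] at h
    exact h
  have hsum : ∑ k, ∫ V, mono2 (i, k) (i, k) V ∂μ = 1 := by
    rw [← integral_finset_sum _ (fun k _ => (nice_mono2 (i, k) (i, k)).integrable μ)]
    have : (fun V : UG N => ∑ k, mono2 (i, k) (i, k) V) = fun _ => (1 : ℂ) := by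
      funext V
      exact row_norm V i
    rw [this, integral_const]
    simp
  rw [Finset.sum_congr rfl (fun k _ => hswap k)] at hsum
  rw [Finset.sum_const, Finset.card_univ, Fintype.card_fin] at hsum
  have hN : ((N : ℂ)) ≠ 0 := Nat.cast_ne_zero.mpr hNpos.ne'
  field_simp
  rw [nsmul_eq_mul] at hsum
  linear_combination hsum

lemma eq1 (hright : ∀ U : UG N, Measure.map (fun V => V * U) μ = μ)
    (hN1 : 1 ≤ N) (n n' m m' : Fin N) (hn : n ≠ n') (hm : m ≠ m') :
    Jm μ (n,m') (n',m') (n,m') (n',m') + ((N:ℂ) - 1) * Jm μ (n,m) (n',m') (n,m') (n',m) = 0 := by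
  have key : ∀ V : UG N, ∑ k, mono (n,k) (n',m') (n,m') (n',k) V = 0 := by
    intro V
    have h : ∀ k : Fin N, mono (n,k) (n',m') (n,m') (n',k) V =
        ((V : Matrix (Fin N) (Fin N) ℂ) n k * star ((V : Matrix (Fin N) (Fin N) ℂ) n' k)) *
          ((V : Matrix (Fin N) (Fin N) ℂ) n' m' * star ((V : Matrix (Fin N) (Fin N) ℂ) n m')) := by
      intro k; unfold mono; ring
    rw [Finset.sum_congr rfl (fun k _ => h k), ← Finset.sum_mul, row_orth V hn, zero_mul]
  have hsum : ∑ k, Jm μ (n,k) (n',m') (n,m') (n',k) = 0 := by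
    unfold Jm
    rw [← integral_finset_sum _ (fun k _ => (nice_mono _ _ _ _).integrable μ)]
    have : (fun V : UG N => ∑ k, mono (n,k) (n',m') (n,m') (n',k) V) = fun _ => (0 : ℂ) := by
      funext V; exact key V
    rw [this, integral_const]
    simp
  have hterm : ∀ k : Fin N, k ≠ m' → Jm μ (n,k) (n',m') (n,m') (n',k)
      = Jm μ (n,m) (n',m') (n,m') (n',m) := by
    intro k hk
    have h := J_col hright m k (n,m) (n',m') (n,m') (n',m)
    simpa [Equiv.swap_apply_left, Equiv.swap_apply_of_ne_of_ne (Ne.symm hm) (Ne.symm hk)] using h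
  rw [← Finset.add_sum_erase _ _ (Finset.mem_univ m')] at hsum
  rw [Finset.sum_congr rfl (fun k hk => hterm k (Finset.ne_of_mem_erase hk))] at hsum
  rw [Finset.sum_const, Finset.card_erase_of_mem (Finset.mem_univ m'), Finset.card_univ,
    Fintype.card_fin, nsmul_eq_mul] at hsum
  have hcast : ((N - 1 : ℕ) : ℂ) = (N : ℂ) - 1 := by
    push_cast [hN1]
    ring
  rw [hcast] at hsum
  exact hsum

lemma eq2 (hleft : ∀ U : UG N, Measure.map (fun V => U * V) μ = μ)
    (hright : ∀ U : UG N, Measure.map (fun V => V * U) μ = μ)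
    (hN1 : 1 ≤ N) (n n' m' : Fin N) (hn : n ≠ n') :
    Jm μ (n',m') (n',m') (n',m') (n',m') + ((N:ℂ) - 1) * Jm μ (n,m') (n',m') (n,m') (n',m')
      = (N:ℂ)⁻¹ := by
  have key : ∀ V : UG N, ∑ k, mono (k,m') (n',m') (k,m') (n',m') V
      = mono2 (n',m') (n',m') V := by
    intro V
    have h : ∀ k : Fin N, mono (k,m') (n',m') (k,m') (n',m') V =
        (star ((V : Matrix (Fin N) (Fin N) ℂ) k m') * (V : Matrix (Fin N) (Fin N) ℂ) k m') *
          ((V : Matrix (Fin N) (Fin N) ℂ) n' m' * star ((V : Matrix (Fin N) (Fin N) ℂ) n' m')) := by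
      intro k; unfold mono; ring
    rw [Finset.sum_congr rfl (fun k _ => h k), ← Finset.sum_mul, col_norm V m', one_mul]
    rfl
  have hsum : ∑ k, Jm μ (k,m') (n',m') (k,m') (n',m') = (N:ℂ)⁻¹ := by
    unfold Jm
    rw [← integral_finset_sum _ (fun k _ => (nice_mono _ _ _ _).integrable μ)]
    have h2 : (fun V : UG N => ∑ k, mono (k,m') (n',m') (k,m') (n',m') V)
        = mono2 (n',m') (n',m') := by
      funext V; exact key V
    rw [h2]
    exact second_moment hright (Nat.lt_of_lt_of_le Nat.zero_lt_one hN1) n' m'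
  have hterm : ∀ k : Fin N, k ≠ n' → Jm μ (k,m') (n',m') (k,m') (n',m')
      = Jm μ (n,m') (n',m') (n,m') (n',m') := by
    intro k hk
    have h := J_row hleft n k (n,m') (n',m') (n,m') (n',m')
    simpa [Equiv.swap_apply_left, Equiv.swap_apply_of_ne_of_ne (Ne.symm hn) (Ne.symm hk)] using h
  rw [← Finset.add_sum_erase _ _ (Finset.mem_univ n')] at hsum
  rw [Finset.sum_congr rfl (fun k hk => hterm k (Finset.ne_of_mem_erase hk))] at hsum
  rw [Finset.sum_const, Finset.card_erase_of_mem (Finset.mem_univ n'), Finset.card_univ,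
    Fintype.card_fin, nsmul_eq_mul] at hsum
  have hcast : ((N - 1 : ℕ) : ℂ) = (N : ℂ) - 1 := by
    push_cast [hN1]
    ring
  rw [hcast] at hsum
  exact hsum

lemma eq4 (hright : ∀ U : UG N, Measure.map (fun V => V * U) μ = μ)
    (hN1 : 1 ≤ N) (n' m m' : Fin N) (hm : m ≠ m') :
    Jm μ (n',m') (n',m') (n',m') (n',m') + ((N:ℂ) - 1) * Jm μ (n',m) (n',m') (n',m) (n',m')
      = (N:ℂ)⁻¹ := by
  have key : ∀ V : UG N, ∑ j, mono (n',j) (n',m') (n',j) (n',m') V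
      = mono2 (n',m') (n',m') V := by
    intro V
    have h : ∀ j : Fin N, mono (n',j) (n',m') (n',j) (n',m') V =
        ((V : Matrix (Fin N) (Fin N) ℂ) n' j * star ((V : Matrix (Fin N) (Fin N) ℂ) n' j)) *
          ((V : Matrix (Fin N) (Fin N) ℂ) n' m' * star ((V : Matrix (Fin N) (Fin N) ℂ) n' m')) := by
      intro j; unfold mono; ring
    rw [Finset.sum_congr rfl (fun j _ => h j), ← Finset.sum_mul, row_norm V n', one_mul]
    rfl
  have hsum : ∑ j, Jm μ (n',j) (n',m') (n',j) (n',m') = (N:ℂ)⁻¹ := by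
    unfold Jm
    rw [← integral_finset_sum _ (fun j _ => (nice_mono _ _ _ _).integrable μ)]
    have h2 : (fun V : UG N => ∑ j, mono (n',j) (n',m') (n',j) (n',m') V)
        = mono2 (n',m') (n',m') := by
      funext V; exact key V
    rw [h2]
    exact second_moment hright (Nat.lt_of_lt_of_le Nat.zero_lt_one hN1) n' m'
  have hterm : ∀ j : Fin N, j ≠ m' → Jm μ (n',j) (n',m') (n',j) (n',m')
      = Jm μ (n',m) (n',m') (n',m) (n',m') := by
    intro j hj
    have h := J_col hright m j (n',m) (n',m') (n',m) (n',m')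
    simpa [Equiv.swap_apply_left, Equiv.swap_apply_of_ne_of_ne (Ne.symm hm) (Ne.symm hj)] using h
  rw [← Finset.add_sum_erase _ _ (Finset.mem_univ m')] at hsum
  rw [Finset.sum_congr rfl (fun j hj => hterm j (Finset.ne_of_mem_erase hj))] at hsum
  rw [Finset.sum_const, Finset.card_erase_of_mem (Finset.mem_univ m'), Finset.card_univ,
    Fintype.card_fin, nsmul_eq_mul] at hsum
  have hcast : ((N - 1 : ℕ) : ℂ) = (N : ℂ) - 1 := by
    push_cast [hN1]
    ring
  rw [hcast] at hsum
  exact hsum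

lemma phase_kill (hright : ∀ U : UG N, Measure.map (fun V => V * U) μ = μ)
    (a : Fin N) (p q r s : Fin N × Fin N) (z : ℂ) (hz : z ≠ 1)
    (hmul : ∀ V : UG N, mono p q r s (V * phaseD a) = z * mono p q r s V) :
    Jm μ p q r s = 0 := by
  have h := integral_right_inv hright (nice_mono p q r s) (phaseD a)
  have h2 : (fun V => mono p q r s (V * phaseD a)) = fun V => z * mono p q r s V :=
    funext hmul
  rw [h2, integral_const_mul] at h
  have h3 : (z - 1) * Jm μ p q r s = 0 := by
    unfold Jm
    linear_combination h
  rcases mul_eq_zero.mp h3 with h4 | h4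
  · exact absurd (by linear_combination h4) hz
  · exact h4

lemma eq3 (hright : ∀ U : UG N, Measure.map (fun V => V * U) μ = μ)
    (n' m m' : Fin N) (hm : m ≠ m') :
    4 * Jm μ (n',m') (n',m') (n',m') (n',m')
      = 2 * Jm μ (n',m') (n',m') (n',m') (n',m')
        + 4 * Jm μ (n',m) (n',m') (n',m) (n',m') := by
  have hmm : m' ≠ m := Ne.symm hm
  have hI3 : Complex.I ^ 3 = -Complex.I := by rw [pow_succ, Complex.I_sq]; ring
  have hIne : (Complex.I : ℂ) ≠ 1 := by
    intro h
    have := congrArg Complex.re h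
    simp at this
  have hm1ne : (-1 : ℂ) ≠ 1 := by norm_num
  have hmIne : (-Complex.I : ℂ) ≠ 1 := by
    intro h
    have := congrArg Complex.re h
    simp at this
  -- the six vanishing cross moments
  have phkill : ∀ (p q r s : Fin N × Fin N) (z : ℂ), z ≠ 1 →
      (∀ V : UG N, mono p q r s (V * phaseD m) = z * mono p q r s V) →
      Jm μ p q r s = 0 := fun p q r s z hz hmul => phase_kill hright m p q r s z hz hmul
  have hX1 : Jm μ (n',m) (n',m) (n',m) (n',m') = 0 := by
    apply phkill _ _ _ _ Complex.I hIne
    intro V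
    unfold mono
    simp only [phaseD_action, eq_self_iff_true, if_true, if_neg hmm, mul_one, Complex.star_def,
      _root_.map_mul, Complex.conj_I]
    try ring
    try (ring_nf; simp only [Complex.I_sq, hI3]; ring)
    simp only [Complex.I_sq, hI3]; ring
  have hX2 : Jm μ (n',m) (n',m) (n',m') (n',m') = 0 := by
    apply phkill _ _ _ _ (-1 : ℂ) hm1ne
    intro V
    unfold mono
    simp only [phaseD_action, eq_self_iff_true, if_true, if_neg hmm, mul_one, Complex.star_def,
      _root_.map_mul, Complex.conj_I]
    try ring
    try (ring_nf; simp only [Complex.I_sq, hI3]; ring)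
    simp only [Complex.I_sq, hI3]; ring
  have hX3 : Jm μ (n',m) (n',m') (n',m) (n',m) = 0 := by
    apply phkill _ _ _ _ (-Complex.I : ℂ) hmIne
    intro V
    unfold mono
    simp only [phaseD_action, eq_self_iff_true, if_true, if_neg hmm, mul_one, Complex.star_def,
      _root_.map_mul, Complex.conj_I]
    try ring
    try (ring_nf; simp only [Complex.I_sq, hI3]; ring)
    simp only [Complex.I_sq, hI3]; ring
  have hX4 : Jm μ (n',m) (n',m') (n',m') (n',m') = 0 := by
    apply phkill _ _ _ _ Complex.I hIne
    intro V
    unfold mono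
    simp only [phaseD_action, eq_self_iff_true, if_true, if_neg hmm, mul_one, Complex.star_def,
      _root_.map_mul, Complex.conj_I]
    try ring
    try (ring_nf; simp only [Complex.I_sq, hI3]; ring)
  have hX5 : Jm μ (n',m') (n',m') (n',m) (n',m) = 0 := by
    apply phkill _ _ _ _ (-1 : ℂ) hm1ne
    intro V
    unfold mono
    simp only [phaseD_action, eq_self_iff_true, if_true, if_neg hmm, mul_one, Complex.star_def,
      _root_.map_mul, Complex.conj_I]
    try ring
    try (ring_nf; simp only [Complex.I_sq, hI3]; ring)
    simp only [Complex.I_sq, hI3]; ring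
  have hX6 : Jm μ (n',m') (n',m') (n',m) (n',m') = 0 := by
    apply phkill _ _ _ _ (-Complex.I : ℂ) hmIne
    intro V
    unfold mono
    simp only [phaseD_action, eq_self_iff_true, if_true, if_neg hmm, mul_one, Complex.star_def,
      _root_.map_mul, Complex.conj_I]
    try ring
    try (ring_nf; simp only [Complex.I_sq, hI3]; ring)
  -- |V n' m|^4 has the same integral as |V n' m'|^4
  have hAA : Jm μ (n',m) (n',m) (n',m) (n',m) = Jm μ (n',m') (n',m') (n',m') (n',m') := by
    have h := J_col hright m' m (n',m') (n',m') (n',m') (n',m')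
    simpa [Equiv.swap_apply_left] using h
  -- constants
  have hc2 : ((((Real.sqrt 2)⁻¹ : ℝ)) : ℂ) * ((((Real.sqrt 2)⁻¹ : ℝ)) : ℂ) = 2⁻¹ := by
    rw [← Complex.ofReal_mul, ← mul_inv, Real.mul_self_sqrt (by norm_num : (0:ℝ) ≤ 2)]
    push_cast
    norm_num
  have hc4 : ((((Real.sqrt 2)⁻¹ : ℝ)) : ℂ) * ((((Real.sqrt 2)⁻¹ : ℝ)) : ℂ)
      * (((((Real.sqrt 2)⁻¹ : ℝ)) : ℂ) * ((((Real.sqrt 2)⁻¹ : ℝ)) : ℂ)) = (4:ℂ)⁻¹ := by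
    rw [hc2]
    norm_num
  -- the expansion of |(a-b)/sqrt2|^4
  have hexp : ∀ V : UG N, mono (n',m') (n',m') (n',m') (n',m') (V * rotU m m' hm) =
      (4:ℂ)⁻¹ * mono (n',m) (n',m) (n',m) (n',m) V + ((4:ℂ)⁻¹ * mono (n',m') (n',m') (n',m') (n',m') V + (mono (n',m) (n',m') (n',m) (n',m') V + (-(2:ℂ)⁻¹ * mono (n',m) (n',m) (n',m) (n',m') V + ((4:ℂ)⁻¹ * mono (n',m) (n',m) (n',m') (n',m') V + (-(2:ℂ)⁻¹ * mono (n',m) (n',m') (n',m) (n',m) V + (-(2:ℂ)⁻¹ * mono (n',m) (n',m') (n',m') (n',m') V + ((4:ℂ)⁻¹ * mono (n',m') (n',m') (n',m) (n',m) V + -(2:ℂ)⁻¹ * mono (n',m') (n',m') (n',m) (n',m') V))))))) := by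
    intro V
    unfold mono
    rw [(rotU_action m m' hm V n').2]
    simp only [Complex.star_def, _root_.map_mul, map_sub, Complex.conj_ofReal]
    linear_combination (((V : Matrix (Fin N) (Fin N) ℂ) n' m - (V : Matrix (Fin N) (Fin N) ℂ) n' m')
      * ((V : Matrix (Fin N) (Fin N) ℂ) n' m - (V : Matrix (Fin N) (Fin N) ℂ) n' m')
      * ((starRingEnd ℂ) ((V : Matrix (Fin N) (Fin N) ℂ) n' m)
          - (starRingEnd ℂ) ((V : Matrix (Fin N) (Fin N) ℂ) n' m'))
      * ((starRingEnd ℂ) ((V : Matrix (Fin N) (Fin N) ℂ) n' m)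
          - (starRingEnd ℂ) ((V : Matrix (Fin N) (Fin N) ℂ) n' m'))) * hc4
  -- integrate the expansion
  have Ig : ∀ (z : ℂ) (p q r s : Fin N × Fin N), Integrable (fun V => z * mono p q r s V) μ :=
    fun z p q r s => ((nice_mono p q r s).integrable μ).const_mul z
  have big := integral_right_inv hright (nice_mono (n',m') (n',m') (n',m') (n',m'))
    (rotU m m' hm)
  rw [show (fun V => mono (n',m') (n',m') (n',m') (n',m') (V * rotU m m' hm))
      = (fun V => (4:ℂ)⁻¹ * mono (n',m) (n',m) (n',m) (n',m) V + ((4:ℂ)⁻¹ * mono (n',m') (n',m') (n',m') (n',m') V + (mono (n',m) (n',m') (n',m) (n',m') V + (-(2:ℂ)⁻¹ * mono (n',m) (n',m) (n',m) (n',m') V + ((4:ℂ)⁻¹ * mono (n',m) (n',m) (n',m') (n',m') V + (-(2:ℂ)⁻¹ * mono (n',m) (n',m') (n',m) (n',m) V + (-(2:ℂ)⁻¹ * mono (n',m) (n',m') (n',m') (n',m') V + ((4:ℂ)⁻¹ * mono (n',m') (n',m') (n',m) (n',m) V + -(2:ℂ)⁻¹ * mono (n',m') (n',m') (n',m) (n',m')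 V)))))))) from funext hexp] at big
  have I1 : Integrable (fun V => (4:ℂ)⁻¹ * mono (n',m) (n',m) (n',m) (n',m) V) μ := Ig ((4:ℂ)⁻¹) (n',m) (n',m) (n',m) (n',m)
  have I2 : Integrable (fun V => (4:ℂ)⁻¹ * mono (n',m') (n',m') (n',m') (n',m') V) μ := Ig ((4:ℂ)⁻¹) (n',m') (n',m') (n',m') (n',m')
  have I3 : Integrable (fun V => mono (n',m) (n',m') (n',m) (n',m') V) μ := (nice_mono (n',m) (n',m') (n',m) (n',m')).integrable μ
  have I4 : Integrable (fun V => -(2:ℂ)⁻¹ * mono (n',m) (n',m) (n',m) (n',m') V) μ := Ig (-(2:ℂ)⁻¹) (n',m) (n',m) (n',m) (n',m')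
  have I5 : Integrable (fun V => (4:ℂ)⁻¹ * mono (n',m) (n',m) (n',m') (n',m') V) μ := Ig ((4:ℂ)⁻¹) (n',m) (n',m) (n',m') (n',m')
  have I6 : Integrable (fun V => -(2:ℂ)⁻¹ * mono (n',m) (n',m') (n',m) (n',m) V) μ := Ig (-(2:ℂ)⁻¹) (n',m) (n',m') (n',m) (n',m)
  have I7 : Integrable (fun V => -(2:ℂ)⁻¹ * mono (n',m) (n',m') (n',m') (n',m') V) μ := Ig (-(2:ℂ)⁻¹) (n',m) (n',m') (n',m') (n',m')
  have I8 : Integrable (fun V => (4:ℂ)⁻¹ * mono (n',m') (n',m') (n',m) (n',m) V) μ := Ig ((4:ℂ)⁻¹) (n',m') (n',m') (n',m) (n',m)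
  have I9 : Integrable (fun V => -(2:ℂ)⁻¹ * mono (n',m') (n',m') (n',m) (n',m') V) μ := Ig (-(2:ℂ)⁻¹) (n',m') (n',m') (n',m) (n',m')
  have T9 : Integrable (fun V => -(2:ℂ)⁻¹ * mono (n',m') (n',m') (n',m) (n',m') V) μ := I9
  have T8 : Integrable (fun V => (4:ℂ)⁻¹ * mono (n',m') (n',m') (n',m) (n',m) V + -(2:ℂ)⁻¹ * mono (n',m') (n',m') (n',m) (n',m') V) μ := I8.add T9
  have T7 : Integrable (fun V => -(2:ℂ)⁻¹ * mono (n',m) (n',m') (n',m') (n',m') V + ((4:ℂ)⁻¹ * mono (n',m') (n',m') (n',m) (n',m) V + -(2:ℂ)⁻¹ * mono (n',m') (n',m') (n',m) (n',m') V)) μ := I7.add T8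
  have T6 : Integrable (fun V => -(2:ℂ)⁻¹ * mono (n',m) (n',m') (n',m) (n',m) V + (-(2:ℂ)⁻¹ * mono (n',m) (n',m') (n',m') (n',m') V + ((4:ℂ)⁻¹ * mono (n',m') (n',m') (n',m) (n',m) V + -(2:ℂ)⁻¹ * mono (n',m') (n',m') (n',m) (n',m') V))) μ := I6.add T7
  have T5 : Integrable (fun V => (4:ℂ)⁻¹ * mono (n',m) (n',m) (n',m') (n',m') V + (-(2:ℂ)⁻¹ * mono (n',m) (n',m') (n',m) (n',m) V + (-(2:ℂ)⁻¹ * mono (n',m) (n',m') (n',m') (n',m') V + ((4:ℂ)⁻¹ * mono (n',m') (n',m') (n',m) (n',m) V + -(2:ℂ)⁻¹ * mono (n',m') (n',m') (n',m) (n',m') V)))) μ := I5.add T6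
  have T4 : Integrable (fun V => -(2:ℂ)⁻¹ * mono (n',m) (n',m) (n',m) (n',m') V + ((4:ℂ)⁻¹ * mono (n',m) (n',m) (n',m') (n',m') V + (-(2:ℂ)⁻¹ * mono (n',m) (n',m') (n',m) (n',m) V + (-(2:ℂ)⁻¹ * mono (n',m) (n',m') (n',m') (n',m') V + ((4:ℂ)⁻¹ * mono (n',m') (n',m') (n',m) (n',m) V + -(2:ℂ)⁻¹ * mono (n',m') (n',m') (n',m) (n',m') V))))) μ := I4.add T5
  have T3 : Integrable (fun V => mono (n',m) (n',m') (n',m) (n',m') V + (-(2:ℂ)⁻¹ * mono (n',m) (n',m) (n',m) (n',m') V + ((4:ℂ)⁻¹ * mono (n',m) (n',m) (n',m') (n',m') V + (-(2:ℂ)⁻¹ * mono (n',m) (n',m') (n',m) (n',m) V + (-(2:ℂ)⁻¹ * mono (n',m) (n',m') (n',m') (n',m') V + ((4:ℂ)⁻¹ * mono (n',m') (n',m') (n',m) (n',m) V + -(2:ℂ)⁻¹ * mono (n',m') (n',m') (n',m) (n',m') V)))))) μ := I3.add T4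
  have T2 : Integrable (fun V => (4:ℂ)⁻¹ * mono (n',m') (n',m') (n',m') (n',m') V + (mono (n',m) (n',m') (n',m) (n',m') V + (-(2:ℂ)⁻¹ * mono (n',m) (n',m) (n',m) (n',m') V + ((4:ℂ)⁻¹ * mono (n',m) (n',m) (n',m') (n',m') V + (-(2:ℂ)⁻¹ * mono (n',m) (n',m') (n',m) (n',m) V + (-(2:ℂ)⁻¹ * mono (n',m) (n',m') (n',m') (n',m') V + ((4:ℂ)⁻¹ * mono (n',m') (n',m') (n',m) (n',m) V + -(2:ℂ)⁻¹ * mono (n',m') (n',m') (n',m) (n',m') V))))))) μ := I2.add T3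
  rw [integral_add I1 T2,
      integral_add I2 T3,
      integral_add I3 T4,
      integral_add I4 T5,
      integral_add I5 T6,
      integral_add I6 T7,
      integral_add I7 T8,
      integral_add I8 T9,
      integral_const_mul, integral_const_mul, integral_const_mul, integral_const_mul,
      integral_const_mul, integral_const_mul, integral_const_mul, integral_const_mul] at big
  unfold Jm at hAA hX1 hX2 hX3 hX4 hX5 hX6 ⊢
  rw [hAA, hX1, hX2, hX3, hX4, hX5, hX6] at big
  linear_combination (-4 : ℂ) * big

end main

/-- Mixed fourth moment of the entries of a Haar-distributed `N × N` unitary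
matrix: for `n ≠ n'` and `m ≠ m'`,
`E[V_{nm} V_{n'm'} V_{nm'}^* V_{n'm}^*] = -1/(N(N²-1))`. -/
theorem haar_unitary_mixed_fourth_moment {N : ℕ} (hN : 2 ≤ N)
    (μ : Measure (Matrix.unitaryGroup (Fin N) ℂ)) [IsProbabilityMeasure μ]
    (hleft : ∀ U : Matrix.unitaryGroup (Fin N) ℂ,
      Measure.map (fun V => U * V) μ = μ)
    (hright : ∀ U : Matrix.unitaryGroup (Fin N) ℂ,
      Measure.map (fun V => V * U) μ = μ)
    (n n' m m' : Fin N) (hn : n ≠ n') (hm : m ≠ m') :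
    ∫ V, (V : Matrix (Fin N) (Fin N) ℂ) n m * (V : Matrix (Fin N) (Fin N) ℂ) n' m' *
        star ((V : Matrix (Fin N) (Fin N) ℂ) n m') *
        star ((V : Matrix (Fin N) (Fin N) ℂ) n' m) ∂μ
      = -1 / ((N : ℂ) * ((N : ℂ) ^ 2 - 1)) := by
  have hN1 : 1 ≤ N := le_trans one_le_two hN
  have hNc : ((N : ℂ)) ≠ 0 := Nat.cast_ne_zero.mpr (by omega)
  have hNm1 : ((N : ℂ)) - 1 ≠ 0 := by
    rw [sub_ne_zero]
    exact_mod_cast (show N ≠ 1 by omega)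
  have hNp1 : ((N : ℂ)) + 1 ≠ 0 := by
    have h : ((N + 1 : ℕ) : ℂ) ≠ 0 := Nat.cast_ne_zero.mpr (by omega)
    push_cast at h
    exact h
  have e3 := eq3 (μ := μ) hright n' m m' hm
  have e4 := eq4 (μ := μ) hright hN1 n' m m' hm
  have e2 := eq2 (μ := μ) hleft hright hN1 n n' m' hn
  have e1 := eq1 (μ := μ) hright hN1 n n' m m' hn hm
  have h1 : ((N : ℂ) + 1) * Jm μ (n',m) (n',m') (n',m) (n',m') = ((N : ℂ))⁻¹ := by
    linear_combination e4 - (1/2 : ℂ) * e3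
  have h2 : ((N : ℂ) - 1) * (Jm μ (n,m') (n',m') (n,m') (n',m')
      - Jm μ (n',m) (n',m') (n',m) (n',m')) = 0 := by
    linear_combination e2 - e4
  have hq : Jm μ (n,m') (n',m') (n,m') (n',m') = Jm μ (n',m) (n',m') (n',m) (n',m') := by
    rcases mul_eq_zero.mp h2 with h | h
    · exact absurd h hNm1
    · exact sub_eq_zero.mp h
  have h3 : ((N : ℂ) + 1) * Jm μ (n,m') (n',m') (n,m') (n',m') = ((N : ℂ))⁻¹ := by
    rw [hq]; exact h1
  have hinv : (N : ℂ) * ((N : ℂ))⁻¹ = 1 := mul_inv_cancel₀ hNc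
  have key : (N : ℂ) * ((N : ℂ) ^ 2 - 1) * Jm μ (n,m) (n',m') (n,m') (n',m) = -1 := by
    linear_combination ((N : ℂ) * ((N : ℂ) + 1)) * e1 - (N : ℂ) * h3 - hinv
  have hD : (N : ℂ) * ((N : ℂ) ^ 2 - 1) ≠ 0 := by
    apply mul_ne_zero hNc
    have : ((N : ℂ) ^ 2 - 1) = ((N : ℂ) - 1) * ((N : ℂ) + 1) := by ring
    rw [this]
    exact mul_ne_zero hNm1 hNp1
  show Jm μ (n,m) (n',m') (n,m') (n',m) = -1 / ((N : ℂ) * ((N : ℂ) ^ 2 - 1))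
  rw [eq_div_iff hD]
  linear_combination key
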